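/- Let H : ℤ → ℝ be a finitely supported interpolatory 1-D filter with dyadic dilation (p = 2), i.e., H(0) = 1 and H(K) = 0 for K ∈ 2ℤ \ {0}, with mask U(ξ) = (1/2) Σ_K H(K)e^{-iKξ}, and let U_1(ξ) := (1/2) Σ_{m∈ℤ} H(1+2m)e^{-imξ}. Then for every n ≥ 1, every ν ∈ {0,1}^n \ {0}, and every ω ∈ ℝ^n: e^{-iω·ν} − 2·\overline{U_1(2ω·ν)} = 2 e^{-iω·ν}·\overline{U(ω·ν + π)}. Consequently, when p = 2 the wavelet masks t_ν of the prime coset sum wavelet filter bank coincide, up to the normalization factor 2, with the coset sum wavelet masks e^{-iω·ν} \overline{U(ω·ν+π)}. -/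
import Mathlib

open scoped Real Classical

noncomputable section

/-- `eC x = e^{-ix}` as a complex number. -/
def eC (x : ℝ) : ℂ := Complex.exp (-(Complex.I * (x : ℂ)))

lemma eC_add (a b : ℝ) : eC (a + b) = eC a * eC b := by
  rw [eC, eC, eC, ← Complex.exp_add]
  congr 1
  push_cast
  ring

lemma conj_eC (y : ℝ) : (starRingEnd ℂ) (eC y) = eC (-y) := by
  rw [eC, eC, ← Complex.exp_conj]
  congr 1
  simp [Complex.conj_ofReal]

lemma eC_neg_pi : eC (-π) = -1 := by
  rw [eC, show -(Complex.I * ((-π : ℝ) : ℂ)) = (π : ℂ) * Complex.I by push_cast; ring,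
    Complex.exp_pi_mul_I]

lemma eC_neg_two_pi_int (m : ℤ) : eC (-(2 * π * (m : ℝ))) = 1 := by
  rw [eC, show -(Complex.I * ((-(2 * π * (m : ℝ)) : ℝ) : ℂ)) =
      (m : ℂ) * (2 * (π : ℂ) * Complex.I) by push_cast; ring,
    Complex.exp_int_mul_two_pi_mul_I]

/-- **For `p = 2` the prime coset sum wavelet masks reduce to the coset sum ones.**
If `H` is a finitely supported interpolatory 1-D filter with dyadic dilation, `U` its
mask and `U₁` its odd polyphase component, then for every `n ≥ 1`, `ν ∈ {0,1}^n \ {0}`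
and `ω ∈ ℝ^n`:
`e^{-iω·ν} - 2 conj(U₁(2ω·ν)) = 2 e^{-iω·ν} conj(U(ω·ν + π))`. -/
theorem dyadic_wavelet_mask_reduces_to_cosetSum
    (H : ℤ → ℝ) (hHfin : (Function.support H).Finite)
    (hH0 : H 0 = 1) (hHeven : ∀ K : ℤ, K ≠ 0 → 2 ∣ K → H K = 0)
    (U : ℝ → ℂ)
    (hU : ∀ ξ : ℝ, U ξ = (1 / 2) * ∑ᶠ K : ℤ, (H K : ℂ) * eC ((K : ℝ) * ξ))
    (U1 : ℝ → ℂ)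
    (hU1 : ∀ ξ : ℝ, U1 ξ = (1 / 2) * ∑ᶠ m : ℤ, (H (1 + 2 * m) : ℂ) * eC ((m : ℝ) * ξ)) :
    ∀ n : ℕ, 1 ≤ n → ∀ ν : Fin n → ℤ, (∀ i, ν i = 0 ∨ ν i = 1) → ν ≠ 0 →
      ∀ ω : Fin n → ℝ,
        eC (∑ i, ω i * (ν i : ℝ)) -
            2 * (starRingEnd ℂ) (U1 (2 * ∑ i, ω i * (ν i : ℝ))) =
          2 * eC (∑ i, ω i * (ν i : ℝ)) *
            (starRingEnd ℂ) (U ((∑ i, ω i * (ν i : ℝ)) + π)) := by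
  intro n hn ν hν hν0 ω
  set x : ℝ := ∑ i, ω i * (ν i : ℝ) with hx
  set s : Finset ℤ := hHfin.toFinset with hs
  set s' : Finset ℤ := s.image (fun K => (K - 1) / 2) with hs'
  have hmemS : ∀ K : ℤ, H K ≠ 0 → K ∈ s := fun K h => hHfin.mem_toFinset.2 h
  -- conjugate of U
  have hconjU : (starRingEnd ℂ) (U (x + π)) =
      (1 / 2) * ∑ K ∈ s, (H K : ℂ) * eC (-((K : ℝ) * (x + π))) := by
    have hsupp : (Function.support fun K : ℤ => (H K : ℂ) * eC ((K : ℝ) * (x + π))) ⊆ ↑s := by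
      intro K hK
      simp only [Function.mem_support] at hK
      have : H K ≠ 0 := by intro h; simp [h] at hK
      exact hmemS K this
    rw [hU (x + π), finsum_eq_sum_of_support_subset _ hsupp, map_mul, map_sum]
    simp only [conj_eC, Complex.conj_ofReal, map_mul]
    rw [show ((1 : ℂ) / 2) = (((1 / 2 : ℝ)) : ℂ) by norm_num, Complex.conj_ofReal]
  -- conjugate of U1
  have hconjU1 : (starRingEnd ℂ) (U1 (2 * x)) =
      (1 / 2) * ∑ m ∈ s', (H (1 + 2 * m) : ℂ) * eC (-((m : ℝ) * (2 * x))) := by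
    have hsupp : (Function.support fun m : ℤ => (H (1 + 2 * m) : ℂ) * eC ((m : ℝ) * (2 * x)))
        ⊆ ↑s' := by
      intro m hm
      simp only [Function.mem_support] at hm
      have h1 : H (1 + 2 * m) ≠ 0 := by intro h; simp [h] at hm
      have h2 : (1 + 2 * m) ∈ s := hmemS _ h1
      simp only [hs', Finset.coe_image, Set.mem_image, Finset.mem_coe]
      exact ⟨1 + 2 * m, h2, by omega⟩
    rw [hU1 (2 * x), finsum_eq_sum_of_support_subset _ hsupp, map_mul, map_sum]
    simp only [conj_eC, Complex.conj_ofReal, map_mul]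
    rw [show ((1 : ℂ) / 2) = (((1 / 2 : ℝ)) : ℂ) by norm_num, Complex.conj_ofReal]
  have h0s : (0 : ℤ) ∈ s := hmemS 0 (by rw [hH0]; norm_num)
  -- the key computation
  have key : ∑ K ∈ s, (H K : ℂ) * eC (x - (K : ℝ) * (x + π)) =
      eC x - ∑ m ∈ s', (H (1 + 2 * m) : ℂ) * eC (-((m : ℝ) * (2 * x))) := by
    rw [← Finset.sum_filter_add_sum_filter_not s (fun K => (2 : ℤ) ∣ K)]
    have heven : ∑ K ∈ s.filter (fun K => (2 : ℤ) ∣ K),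
        (H K : ℂ) * eC (x - (K : ℝ) * (x + π)) = eC x := by
      rw [Finset.sum_eq_single_of_mem 0 (Finset.mem_filter.2 ⟨h0s, ⟨0, by ring⟩⟩)
        (fun K hK hKne => by
          have := hHeven K hKne (Finset.mem_filter.mp hK).2
          simp [this])]
      simp [hH0]
    have hodd : ∑ K ∈ s.filter (fun K => ¬(2 : ℤ) ∣ K),
        (H K : ℂ) * eC (x - (K : ℝ) * (x + π)) =
        -∑ m ∈ s', (H (1 + 2 * m) : ℂ) * eC (-((m : ℝ) * (2 * x))) := by
      set t : Finset ℤ := s.filter (fun K => ¬(2 : ℤ) ∣ K) with ht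
      have hsub : ∑ m ∈ s', (H (1 + 2 * m) : ℂ) * eC (-((m : ℝ) * (2 * x))) =
          ∑ m ∈ t.image (fun K => (K - 1) / 2),
            (H (1 + 2 * m) : ℂ) * eC (-((m : ℝ) * (2 * x))) := by
        refine (Finset.sum_subset
          (Finset.image_subset_image (Finset.filter_subset _ _)) ?_).symm
        intro m _ hmnot
        by_contra hne
        have h1 : H (1 + 2 * m) ≠ 0 := by intro h; simp [h] at hne
        have h2 : (1 + 2 * m) ∈ s := hmemS _ h1
        have h3 : (1 + 2 * m) ∈ t := Finset.mem_filter.2 ⟨h2, by omega⟩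
        exact hmnot (Finset.mem_image.2 ⟨1 + 2 * m, h3, by omega⟩)
      have hinj : ∀ K1 ∈ t, ∀ K2 ∈ t, (K1 - 1) / 2 = (K2 - 1) / 2 → K1 = K2 := by
        intro K1 hK1 K2 hK2 h
        have o1 : ¬(2 : ℤ) ∣ K1 := (Finset.mem_filter.mp hK1).2
        have o2 : ¬(2 : ℤ) ∣ K2 := (Finset.mem_filter.mp hK2).2
        omega
      rw [hsub, Finset.sum_image hinj, ← Finset.sum_neg_distrib]
      refine Finset.sum_congr rfl fun K hK => ?_
      have o1 : ¬(2 : ℤ) ∣ K := (Finset.mem_filter.mp hK).2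
      set m : ℤ := (K - 1) / 2 with hm
      have hKm : K = 1 + 2 * m := by omega
      have hKr : (K : ℝ) = 1 + 2 * (m : ℝ) := by exact_mod_cast congrArg Int.cast hKm
      have harg : x - (K : ℝ) * (x + π) =
          (-((m : ℝ) * (2 * x))) + (-π + -(2 * π * (m : ℝ))) := by
        rw [hKr]; ring
      rw [harg, eC_add, eC_add, eC_neg_pi, eC_neg_two_pi_int, ← hKm]
      ring
    rw [heven, hodd]
    ring
  rw [hconjU, hconjU1]
  have expand : (2 : ℂ) * eC x * ((1 / 2) * ∑ K ∈ s, (H K : ℂ) * eC (-((K : ℝ) * (x + π)))) =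
      ∑ K ∈ s, (H K : ℂ) * eC (x - (K : ℝ) * (x + π)) := by
    rw [show (2 : ℂ) * eC x * ((1 / 2) * ∑ K ∈ s, (H K : ℂ) * eC (-((K : ℝ) * (x + π)))) =
        eC x * ∑ K ∈ s, (H K : ℂ) * eC (-((K : ℝ) * (x + π))) by ring, Finset.mul_sum]
    refine Finset.sum_congr rfl fun K _ => ?_
    rw [sub_eq_add_neg, eC_add]
    ring
  rw [expand, key]
  ring
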